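/- Let a > 0, let f : ℂ → ℂ be complex-differentiable on the open ball B(0,a), and assume that z ↦ ‖f(z)‖² is integrable on B(0,a). Then for every z with ‖z‖ < a, one has ‖ ∫_{t ∈ [0,1]} f(t·z) · z dt ‖ ≤ π^{-1/2} · ‖f‖_{L²(B_a)} · log( a / (a − ‖z‖) ). -/

import Mathlib

/-!
The mean value property applied to `f ^ 2` on the circles about `w`, integrated in polar
coordinates, gives `π R² ‖f w‖² ≤ ∫_{B(w,R)} ‖f‖²`. With `R = a - ‖w‖` this bounds `‖f w‖` by
`π^{-1/2} ‖f‖_{L²(B_a)} / (a - ‖w‖)`, and integrating that bound along the segment `[0, z]` gives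
`∫₀¹ ‖z‖ / (a - t ‖z‖) dt = log (a / (a - ‖z‖))`.
-/

open Complex Metric MeasureTheory Set
open scoped Real ENNReal

theorem Real.norm_circleAverage_le {E : Type*} [NormedAddCommGroup E] [NormedSpace ℝ E]
    (f : ℂ → E) (c : ℂ) (R : ℝ) :
    ‖circleAverage f c R‖ ≤ circleAverage (fun z ↦ ‖f z‖) c R := by
  rw [circleAverage_def, circleAverage_def, norm_smul, smul_eq_mul,
    Real.norm_of_nonneg (by positivity)]
  gcongr
  exact intervalIntegral.norm_integral_le_integral_norm two_pi_pos.le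

theorem DiffContOnCl.sq_norm_le_circleAverage {f : ℂ → ℂ} {c : ℂ} {R : ℝ}
    (hf : DiffContOnCl ℂ f (ball c |R|)) :
    ‖f c‖ ^ 2 ≤ Real.circleAverage (fun z ↦ ‖f z‖ ^ 2) c R := by
  have hmean : Real.circleAverage (f • f) c R = f c * f c := (hf.smul hf).circleAverage
  calc ‖f c‖ ^ 2 = ‖Real.circleAverage (f • f) c R‖ := by rw [hmean, norm_mul, sq]
    _ ≤ Real.circleAverage (fun z ↦ ‖(f • f) z‖) c R := Real.norm_circleAverage_le _ c R
    _ = Real.circleAverage (fun z ↦ ‖f z‖ ^ 2) c R := by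
      simp only [smul_eq_mul, Pi.mul_apply, norm_mul, sq]

theorem Real.ofReal_two_pi_mul_circleAverage {h : ℂ → ℝ} {c : ℂ} {R : ℝ}
    (hh : CircleIntegrable h c R) (h_nonneg : 0 ≤ h) :
    ENNReal.ofReal (2 * π * circleAverage h c R) =
      ∫⁻ θ in Ioo (-π) π, ENNReal.ofReal (h (circleMap c R θ)) := by
  have hper : Function.Periodic (fun θ ↦ h (circleMap c R θ)) (2 * π) :=
    fun θ ↦ by simp only [periodic_circleMap c R θ]
  have hshift := hper.intervalIntegral_add_eq (-π) 0
  rw [zero_add, show -π + 2 * π = π by ring] at hshift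
  have hint : IntervalIntegrable (fun θ ↦ h (circleMap c R θ)) volume (-π) π :=
    hper.intervalIntegrable two_pi_pos.ne' (t := 0) (by rwa [zero_add]) _ _
  rw [circleAverage_def, smul_eq_mul, ← mul_assoc, mul_inv_cancel₀ two_pi_pos.ne', one_mul,
    ← hshift, intervalIntegral.integral_of_le (by linarith [pi_pos]), integral_Ioc_eq_integral_Ioo,
    ofReal_integral_eq_lintegral_ofReal]
  · exact hint.1.mono_set Ioo_subset_Ioc_self
  · exact Filter.Eventually.of_forall fun θ ↦ h_nonneg _

theorem circleMap_eq_add_polarCoord_symm (c : ℂ) (p : ℝ × ℝ) :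
    circleMap c p.1 p.2 = c + Complex.polarCoord.symm p := by
  rw [Complex.polarCoord_symm_apply, circleMap, Complex.exp_mul_I]
  push_cast
  ring

theorem setLIntegral_ball_eq_lintegral_circleMap {g : ℂ → ℝ≥0∞} {c : ℂ} {R : ℝ}
    (hg : ContinuousOn g (ball c R)) :
    ∫⁻ z in ball c R, g z =
      ∫⁻ r in Ioo 0 R, ∫⁻ θ in Ioo (-π) π, ENNReal.ofReal r * g (circleMap c r θ) := by
  set S : Set (ℝ × ℝ) := Ioo 0 R ×ˢ Ioo (-π) π
  have hS : MeasurableSet S := measurableSet_Ioo.prod measurableSet_Ioo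
  have hS_target : S ⊆ polarCoord.target := prod_mono Ioo_subset_Ioi_self subset_rfl
  have hmem : ∀ r θ, 0 < r → (circleMap c r θ ∈ ball c R ↔ r < R) := fun r θ hr ↦ by
    rw [mem_ball, mem_sphere.1 (circleMap_mem_sphere' c r θ), abs_of_pos hr]
  have hmaps : MapsTo (fun p : ℝ × ℝ ↦ circleMap c p.1 p.2) S (ball c R) :=
    fun p hp ↦ (hmem _ _ hp.1.1).2 hp.1.2
  have hpolar : ∀ p ∈ polarCoord.target,
      ENNReal.ofReal p.1 • (ball c R).indicator g (c + Complex.polarCoord.symm p) =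
        S.indicator (fun q ↦ ENNReal.ofReal q.1 * g (circleMap c q.1 q.2)) p := by
    rintro ⟨r, θ⟩ ⟨hr, hθ⟩
    rw [← circleMap_eq_add_polarCoord_symm]
    by_cases hrR : r < R
    · rw [indicator_of_mem ((hmem r θ hr).2 hrR),
        indicator_of_mem (show (r, θ) ∈ S from ⟨⟨hr, hrR⟩, hθ⟩), smul_eq_mul]
    · rw [indicator_of_notMem (mt (hmem r θ hr).1 hrR), indicator_of_notMem (fun h ↦ hrR h.1.2),
        smul_zero]
  have hmeas : AEMeasurable (fun p : ℝ × ℝ ↦ ENNReal.ofReal p.1 * g (circleMap c p.1 p.2))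
      ((volume.restrict (Ioo 0 R)).prod (volume.restrict (Ioo (-π) π))) := by
    rw [Measure.prod_restrict, ← Measure.volume_eq_prod]
    exact (measurable_fst.ennreal_ofReal.aemeasurable).mul
      ((hg.comp (by fun_prop) hmaps).aemeasurable hS)
  calc ∫⁻ z in ball c R, g z = ∫⁻ z, (ball c R).indicator g (c + z) := by
        rw [lintegral_add_left_eq_self, lintegral_indicator measurableSet_ball]
    _ = ∫⁻ p in S, ENNReal.ofReal p.1 * g (circleMap c p.1 p.2) := by
        rw [← Complex.lintegral_comp_polarCoord_symm,
          setLIntegral_congr_fun polarCoord.open_target.measurableSet hpolar,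
          setLIntegral_indicator hS, inter_eq_left.2 hS_target]
    _ = _ := by
        rw [Measure.volume_eq_prod, ← Measure.prod_restrict]
        exact lintegral_prod _ hmeas

theorem DifferentiableOn.ofReal_pi_mul_sq_mul_sq_norm_le_setLIntegral {f : ℂ → ℂ} {c : ℂ}
    {R : ℝ} (hf : DifferentiableOn ℂ f (ball c R)) (hR : 0 ≤ R) :
    ENNReal.ofReal (π * R ^ 2 * ‖f c‖ ^ 2) ≤ ∫⁻ z in ball c R, ENNReal.ofReal (‖f z‖ ^ 2) := by
  set k := 2 * π * ‖f c‖ ^ 2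
  have hradial :
      ∫⁻ r in Ioo 0 R, ENNReal.ofReal (r * k) = ENNReal.ofReal (π * R ^ 2 * ‖f c‖ ^ 2) := by
    rw [← ofReal_integral_eq_lintegral_ofReal, ← integral_Ioc_eq_integral_Ioo,
      ← intervalIntegral.integral_of_le hR, intervalIntegral.integral_mul_const, integral_id]
    · congr 1
      ring
    · exact (continuous_id.mul continuous_const).integrableOn_Icc.mono_set Ioo_subset_Icc_self
    · exact ae_restrict_of_forall_mem measurableSet_Ioo fun r hr ↦ by positivity [hr.1.le]
  have hcircle : ∀ r ∈ Ioo 0 R, ENNReal.ofReal (r * k) ≤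
      ∫⁻ θ in Ioo (-π) π, ENNReal.ofReal r * ENNReal.ofReal (‖f (circleMap c r θ)‖ ^ 2) := by
    intro r hr
    have hdiff : DiffContOnCl ℂ f (ball c |r|) := by
      rw [abs_of_pos hr.1]
      exact hf.diffContOnCl_ball (closedBall_subset_ball hr.2)
    rw [lintegral_const_mul' _ _ ENNReal.ofReal_ne_top,
      ← Real.ofReal_two_pi_mul_circleAverage (h := fun z ↦ ‖f z‖ ^ 2)
        ((hdiff.continuousOn_ball.norm.pow 2).mono sphere_subset_closedBall).circleIntegrable'
        (fun _ ↦ sq_nonneg _),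
      ← ENNReal.ofReal_mul hr.1.le]
    gcongr
    · exact hr.1.le
    · exact mul_le_mul_of_nonneg_left hdiff.sq_norm_le_circleAverage Real.two_pi_pos.le
  rw [← hradial, setLIntegral_ball_eq_lintegral_circleMap
    (g := fun z ↦ ENNReal.ofReal (‖f z‖ ^ 2))
    (ENNReal.continuous_ofReal.comp_continuousOn (hf.continuousOn.norm.pow 2))]
  exact setLIntegral_mono' measurableSet_Ioo hcircle

theorem norm_le_sqrt_div_of_integrableOn_sq {f : ℂ → ℂ} {c : ℂ} {a : ℝ}
    (hf : DifferentiableOn ℂ f (ball c a)) (hf2 : IntegrableOn (fun z ↦ ‖f z‖ ^ 2) (ball c a))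
    {w : ℂ} (hw : w ∈ ball c a) :
    ‖f w‖ ≤ √((∫ z in ball c a, ‖f z‖ ^ 2) / π) / (a - dist w c) := by
  set M := ∫ z in ball c a, ‖f z‖ ^ 2
  have hR : 0 < a - dist w c := sub_pos.2 hw
  have hsub : ball w (a - dist w c) ⊆ ball c a := ball_subset_ball' (by linarith)
  have hM : π * (a - dist w c) ^ 2 * ‖f w‖ ^ 2 ≤ M := by
    rw [← ENNReal.ofReal_le_ofReal_iff (integral_nonneg fun _ ↦ sq_nonneg _),
      ofReal_integral_eq_lintegral_ofReal hf2 (Filter.Eventually.of_forall fun _ ↦ sq_nonneg _)]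
    exact ((hf.mono hsub).ofReal_pi_mul_sq_mul_sq_norm_le_setLIntegral hR.le).trans
      (lintegral_mono_set hsub)
  rw [le_div_iff₀ hR, Real.le_sqrt (by positivity) (by positivity), le_div_iff₀ Real.pi_pos]
  linear_combination hM

section LogIntegral

variable {a b : ℝ}

theorem sub_mul_pos_of_mem_Icc (ha : 0 < a) (hb : b < a) {t : ℝ} (ht : t ∈ Icc (0 : ℝ) 1) :
    0 < a - t * b := by
  rcases le_or_gt b 0 with hb0 | hb0
  · nlinarith [mul_nonneg ht.1 (neg_nonneg.2 hb0)]
  · nlinarith [mul_le_mul_of_nonneg_right ht.2 hb0.le]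

theorem continuousOn_div_sub_mul (ha : 0 < a) (hb : b < a) :
    ContinuousOn (fun t ↦ b / (a - t * b)) (Icc 0 1) :=
  continuousOn_const.div (by fun_prop) fun _ ht ↦ (sub_mul_pos_of_mem_Icc ha hb ht).ne'

theorem integral_div_sub_mul (ha : 0 < a) (hb : b < a) :
    ∫ t in (0 : ℝ)..1, b / (a - t * b) = Real.log (a / (a - b)) := by
  have hderiv : ∀ t ∈ uIcc (0 : ℝ) 1,
      HasDerivAt (fun t ↦ -Real.log (a - t * b)) (b / (a - t * b)) t := by
    intro t ht
    rw [uIcc_of_le zero_le_one] at ht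
    have hlin : HasDerivAt (fun t ↦ a - t * b) (-b) t := by
      simpa using ((hasDerivAt_id t).mul_const b).const_sub a
    exact (hlin.log (sub_mul_pos_of_mem_Icc ha hb ht).ne').neg.congr_deriv (by ring)
  rw [intervalIntegral.integral_eq_sub_of_hasDerivAt hderiv
    ((continuousOn_div_sub_mul ha hb).intervalIntegrable_of_Icc zero_le_one),
    Real.log_div ha.ne' (sub_pos.2 hb).ne']
  simp only [one_mul, zero_mul, sub_zero]
  ring

end LogIntegral

theorem norm_integral_segment_le_mul_log {f : ℂ → ℂ} {a C : ℝ}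
    (hf : ∀ w ∈ ball (0 : ℂ) a, ‖f w‖ ≤ C / (a - ‖w‖)) {z : ℂ} (hz : ‖z‖ < a) :
    ‖∫ t in (0 : ℝ)..1, f ((t : ℂ) * z) * z‖ ≤ C * Real.log (a / (a - ‖z‖)) := by
  have ha : 0 < a := (norm_nonneg z).trans_lt hz
  have hpointwise :
      ∀ t ∈ Ioc (0 : ℝ) 1, ‖f ((t : ℂ) * z) * z‖ ≤ C * (‖z‖ / (a - t * ‖z‖)) := by
    intro t ht
    have hnorm : ‖(t : ℂ) * z‖ = t * ‖z‖ := by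
      rw [norm_mul, Complex.norm_real, Real.norm_of_nonneg ht.1.le]
    have hpos := sub_mul_pos_of_mem_Icc ha hz (Ioc_subset_Icc_self ht)
    have hmem : (t : ℂ) * z ∈ ball (0 : ℂ) a := by
      rw [mem_ball_zero_iff, hnorm]
      linarith
    calc ‖f ((t : ℂ) * z) * z‖ ≤ C / (a - t * ‖z‖) * ‖z‖ := by
          rw [norm_mul, ← hnorm]
          gcongr
          exact hf _ hmem
      _ = C * (‖z‖ / (a - t * ‖z‖)) := by ring
  calc ‖∫ t in (0 : ℝ)..1, f ((t : ℂ) * z) * z‖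
      ≤ ∫ t in (0 : ℝ)..1, C * (‖z‖ / (a - t * ‖z‖)) :=
        intervalIntegral.norm_integral_le_of_norm_le zero_le_one (ae_of_all _ hpointwise)
          (((continuousOn_div_sub_mul ha hz).intervalIntegrable_of_Icc zero_le_one).const_mul C)
    _ = C * Real.log (a / (a - ‖z‖)) := by
        rw [intervalIntegral.integral_const_mul, integral_div_sub_mul ha hz]

theorem segment_integral_le_log_general (a : ℝ) (f : ℂ → ℂ)
    (hf : DifferentiableOn ℂ f (ball (0 : ℂ) a))
    (hf2 : IntegrableOn (fun z => ‖f z‖ ^ 2) (ball (0 : ℂ) a)) :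
    ∀ z : ℂ, ‖z‖ < a →
      ‖∫ t in (0:ℝ)..1, f ((t : ℂ) * z) * z‖ ≤
        Real.pi ^ (-(1 : ℝ) / 2) * Real.sqrt (∫ w in ball (0 : ℂ) a, ‖f w‖ ^ 2) *
          Real.log (a / (a - ‖z‖)) := by
  intro z hz
  have hconst : Real.pi ^ (-(1 : ℝ) / 2) * √(∫ w in ball (0 : ℂ) a, ‖f w‖ ^ 2) =
      √((∫ w in ball (0 : ℂ) a, ‖f w‖ ^ 2) / π) := by
    rw [neg_div, Real.rpow_neg Real.pi_pos.le, ← Real.sqrt_eq_rpow,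
      Real.sqrt_div' _ Real.pi_pos.le]
    ring
  rw [hconst]
  refine norm_integral_segment_le_mul_log (fun w hw ↦ ?_) hz
  simpa only [dist_zero_right] using norm_le_sqrt_div_of_integrableOn_sq hf hf2 hw

/-- Radial primitive estimate: for `f` holomorphic on `ball 0 a` with `‖f‖²` integrable,
the segment integral from `0` to `z` satisfies
`‖∫₀¹ f(tz)·z dt‖ ≤ π^{-1/2} ‖f‖_{L²(B_a)} log(a/(a - ‖z‖))`. -/
theorem segment_integral_le_log (a : ℝ) (ha : 0 < a) (f : ℂ → ℂ)
    (hf : DifferentiableOn ℂ f (ball (0 : ℂ) a))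
    (hf2 : IntegrableOn (fun z => ‖f z‖ ^ 2) (ball (0 : ℂ) a)) :
    ∀ z : ℂ, ‖z‖ < a →
      ‖∫ t in (0:ℝ)..1, f ((t : ℂ) * z) * z‖ ≤
        Real.pi ^ (-(1 : ℝ) / 2) * Real.sqrt (∫ w in ball (0 : ℂ) a, ‖f w‖ ^ 2) *
          Real.log (a / (a - ‖z‖)) :=
  segment_integral_le_log_general a f hf hf2
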